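/- arXiv:math/0612110 — 2 statements merged into one kernel-verified Lean document; each statement's English description precedes it below -/
import Mathlib

section
/- Let β(τ) = (1/b₀ + cτ)^{-1} with b₀, c > 0. Then for any constants c₁, c₂ > 0 there exists a constant C = C(c₁, c₂, c) such that ∫₀^T e^{-c₁(T-σ)} β(σ)^{c₂} dσ ≤ C β(T)^{c₂} for all T ≥ 0. -/
/-!
The weight `β(σ) = (1/b₀ + cσ)⁻¹` decays only polynomially: for `σ ≤ T` one has
`β(σ) ≤ (1 + c b₀ (T - σ)) β(T)`. The polynomial factor `(1 + c b₀ t) ^ c₂` is absorbed by half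
of the exponential kernel, `(1 + c b₀ t) ^ c₂ ≤ K e^{c₁ t / 2}`, so the integrand is at most
`K β(T) ^ c₂ e^{-c₁ (T - σ) / 2}`, whose integral over `[0, T]` is at most `2 K β(T) ^ c₂ / c₁`.
-/

open Real Set MeasureTheory

lemma one_add_mul_le_mul_exp {a l t : ℝ} (ha : 0 ≤ a) (hl : 0 < l) (ht : 0 ≤ t) :
    1 + a * t ≤ (1 + a / l) * exp (l * t) := by
  calc 1 + a * t ≤ (1 + a / l) * (l * t + 1) := by
        have : a / l * (l * t) = a * t := by field_simp
        nlinarith [mul_nonneg hl.le ht, div_nonneg ha hl.le]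
    _ ≤ (1 + a / l) * exp (l * t) := by gcongr; exact add_one_le_exp _

lemma one_add_mul_rpow_le_mul_exp {a r t p : ℝ} (ha : 0 ≤ a) (hr : 0 < r) (ht : 0 ≤ t)
    (hp : 0 < p) : (1 + a * t) ^ p ≤ (1 + a * p / r) ^ p * exp (r * t) := by
  have hrp : 0 < r / p := div_pos hr hp
  calc (1 + a * t) ^ p ≤ ((1 + a / (r / p)) * exp (r / p * t)) ^ p :=
        rpow_le_rpow (by positivity) (one_add_mul_le_mul_exp ha hrp ht) hp.le
    _ = (1 + a * p / r) ^ p * exp (r * t) := by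
        rw [mul_rpow (by positivity) (exp_pos _).le, ← exp_mul, div_div_eq_mul_div]
        congr 2
        field_simp

lemma inv_add_mul_le_one_add_mul_mul_inv {b c s t : ℝ} (hb : 0 < b) (hc : 0 ≤ c)
    (hs : 0 ≤ s) (hst : s ≤ t) :
    (1 / b + c * s)⁻¹ ≤ (1 + c * b * (t - s)) * (1 / b + c * t)⁻¹ := by
  have ht : 0 ≤ t := hs.trans hst
  rw [← div_eq_mul_inv, le_div_iff₀ (by positivity), ← div_eq_inv_mul,
    div_le_iff₀ (by positivity)]
  have : c * b * (t - s) * (1 / b) = c * (t - s) := by field_simp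
  nlinarith [mul_nonneg (mul_nonneg (mul_nonneg hc hb.le) (sub_nonneg.2 hst)) (mul_nonneg hc hs)]

lemma inv_add_mul_rpow_le {b c s t r p : ℝ} (hb : 0 < b) (hc : 0 ≤ c) (hs : 0 ≤ s)
    (hst : s ≤ t) (hr : 0 < r) (hp : 0 < p) :
    ((1 / b + c * s)⁻¹) ^ p ≤
      (1 + c * b * p / r) ^ p * exp (r * (t - s)) * ((1 / b + c * t)⁻¹) ^ p := by
  have ht : 0 ≤ t := hs.trans hst
  calc ((1 / b + c * s)⁻¹) ^ p ≤ ((1 + c * b * (t - s)) * (1 / b + c * t)⁻¹) ^ p :=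
        rpow_le_rpow (by positivity) (inv_add_mul_le_one_add_mul_mul_inv hb hc hs hst) hp.le
    _ = (1 + c * b * (t - s)) ^ p * ((1 / b + c * t)⁻¹) ^ p :=
        mul_rpow (by nlinarith [mul_nonneg (mul_nonneg hc hb.le) (sub_nonneg.2 hst)])
          (by positivity)
    _ ≤ (1 + c * b * p / r) ^ p * exp (r * (t - s)) * ((1 / b + c * t)⁻¹) ^ p := by
        gcongr
        exact one_add_mul_rpow_le_mul_exp (by positivity) hr (sub_nonneg.2 hst) hp

lemma integral_exp_neg_mul_sub {k : ℝ} (hk : k ≠ 0) (T : ℝ) :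
    ∫ σ in (0:ℝ)..T, exp (-k * (T - σ)) = (1 - exp (-k * T)) / k := by
  rw [intervalIntegral.integral_comp_sub_left (fun x => exp (-k * x)),
    intervalIntegral.integral_comp_mul_left exp (neg_ne_zero.2 hk), integral_exp,
    sub_zero, sub_self, mul_zero, exp_zero, smul_eq_mul, inv_neg]
  field_simp
  ring

lemma integral_le_div_of_le_mul_exp {f : ℝ → ℝ} {k M T : ℝ} (hk : 0 < k) (hT : 0 ≤ T)
    (hM : 0 ≤ M) (hf₀ : ∀ σ ∈ Ioc 0 T, 0 ≤ f σ)
    (hf : ∀ σ ∈ Ioc 0 T, f σ ≤ M * exp (-k * (T - σ))) :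
    ∫ σ in (0:ℝ)..T, f σ ≤ M / k := by
  have hexp : IntegrableOn (fun σ => M * exp (-k * (T - σ))) (Ioc 0 T) :=
    (Continuous.integrableOn_Icc (by fun_prop)).mono_set Ioc_subset_Icc_self
  calc ∫ σ in (0:ℝ)..T, f σ ≤ ∫ σ in (0:ℝ)..T, M * exp (-k * (T - σ)) := by
        rw [intervalIntegral.integral_of_le hT, intervalIntegral.integral_of_le hT]
        exact integral_mono_of_nonneg (ae_restrict_of_forall_mem measurableSet_Ioc hf₀) hexp
          (ae_restrict_of_forall_mem measurableSet_Ioc hf)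
    _ = M * ((1 - exp (-k * T)) / k) := by
        rw [intervalIntegral.integral_const_mul, integral_exp_neg_mul_sub hk.ne']
    _ ≤ M / k := by
        rw [mul_div_assoc']
        exact div_le_div_of_nonneg_right
          (mul_le_of_le_one_right hM (by linarith [exp_pos (-k * T)])) hk.le

/-- Key integral estimate: for `β(τ) = (1/b₀ + cτ)⁻¹` and any `c₁, c₂ > 0`
there is `C = C(c₁,c₂,c)` with
`∫₀^T e^{-c₁(T-σ)} β(σ)^{c₂} dσ ≤ C β(T)^{c₂}` for all `T ≥ 0`. -/
theorem integral_estimate (b₀ c : ℝ) (hb : 0 < b₀) (hc : 0 < c)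
    (c₁ c₂ : ℝ) (h1 : 0 < c₁) (h2 : 0 < c₂) :
    ∃ C > (0:ℝ), ∀ T : ℝ, 0 ≤ T →
      (∫ σ in (0:ℝ)..T, Real.exp (-c₁ * (T - σ)) * ((1 / b₀ + c * σ)⁻¹) ^ c₂)
        ≤ C * ((1 / b₀ + c * T)⁻¹) ^ c₂ := by
  set K := (1 + c * b₀ * c₂ / (c₁ / 2)) ^ c₂
  refine ⟨K / (c₁ / 2), by positivity, fun T hT => ?_⟩
  calc _ ≤ K * ((1 / b₀ + c * T)⁻¹) ^ c₂ / (c₁ / 2) := by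
        refine integral_le_div_of_le_mul_exp (by positivity) hT (by positivity)
          (fun σ hσ => by have := hσ.1.le; positivity) fun σ hσ => ?_
        calc exp (-c₁ * (T - σ)) * ((1 / b₀ + c * σ)⁻¹) ^ c₂
            ≤ exp (-c₁ * (T - σ)) * (K * exp (c₁ / 2 * (T - σ)) * ((1 / b₀ + c * T)⁻¹) ^ c₂) := by
              gcongr
              exact inv_add_mul_rpow_le hb hc.le hσ.1.le hσ.2 (by positivity) h2
          _ = K * ((1 / b₀ + c * T)⁻¹) ^ c₂ * exp (-(c₁ / 2) * (T - σ)) := by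
              rw [show -(c₁ / 2) * (T - σ) = -c₁ * (T - σ) + c₁ / 2 * (T - σ) by ring, exp_add]
              ring
    _ = K / (c₁ / 2) * ((1 / b₀ + c * T)⁻¹) ^ c₂ := by ring
end

section
/- Let Γ : [0,T] → ℝ be C¹ and satisfy ∂_τ Γ + m(τ)Γ = f(τ) with m(τ) ≥ 1/2 for all τ, and suppose |f(τ)| ≤ K β(τ)² where β(τ) = (1/b₀ + cτ)^{-1}, b₀, c > 0. Then |Γ(τ)| ≤ e^{-τ/2}|Γ(0)| + C K β(τ)² for a constant C depending only on c. -/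
/-!
Compare `Γ` with the solution `w` of `w' + r w = g`, `w 0 = |Γ 0|`, for a continuous `g > |f|`:
where `Γ` first touches `± w`, the sign of `±Γ` and `m ≥ r` give `±Γ' < w'`, so `±Γ` cannot cross
`w`; this barrier argument needs no integrability of `m`. For `r = 1/2` and `g = K β² (+ ε)` it
remains to bound `w(τ) - e^{-τ/2} |Γ 0| = ∫₀^τ e^{-(τ-s)/2} g(s) ds`. Since
`β(s) ≤ (1 + c b₀ (τ - s)) β(τ)`, half of the exponential absorbs the polynomial factor,
`e^{-(τ-s)/2} β(s)² ≲ e^{-(τ-s)/4} β(τ)²`, whose integral is at most `4 β(τ)²`.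
-/

open Real Set Filter Topology

noncomputable def duhamel (r A : ℝ) (g : ℝ → ℝ) (x : ℝ) : ℝ :=
  exp (-(r * x)) * (A + ∫ s in (0 : ℝ)..x, exp (r * s) * g s)

section Duhamel

variable {r A : ℝ} {g : ℝ → ℝ}

theorem hasDerivAt_duhamel (hg : Continuous g) (x : ℝ) :
    HasDerivAt (duhamel r A g) (g x - r * duhamel r A g x) x := by
  have hI : HasDerivAt (fun y => ∫ s in (0 : ℝ)..y, exp (r * s) * g s) (exp (r * x) * g x) x :=
    (Continuous.integral_hasStrictDerivAt (by fun_prop) 0 x).hasDerivAt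
  have hexp : HasDerivAt (fun y => exp (-(r * y))) (exp (-(r * x)) * -r) x := by
    simpa using ((hasDerivAt_id x).const_mul r).neg.exp
  refine (hexp.mul (hI.const_add A)).congr_deriv ?_
  have : exp (-(r * x)) * exp (r * x) = 1 := by rw [← exp_add]; simp
  simp only [duhamel]
  linear_combination g x * this

theorem duhamel_nonneg {x : ℝ} (hA : 0 ≤ A) (hx : 0 ≤ x) (hg : ∀ s ∈ Icc 0 x, 0 ≤ g s) :
    0 ≤ duhamel r A g x :=
  mul_nonneg (exp_pos _).le <| add_nonneg hA <|
    intervalIntegral.integral_nonneg hx fun s hs => mul_nonneg (exp_pos _).le (hg s hs)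

theorem duhamel_zero_eq_integral (x : ℝ) :
    duhamel r 0 g x = ∫ s in (0 : ℝ)..x, exp (-(r * (x - s))) * g s := by
  rw [duhamel, zero_add, ← intervalIntegral.integral_const_mul]
  congr 1 with s
  rw [← mul_assoc, ← exp_add]
  ring_nf

theorem duhamel_const_mul (K x : ℝ) :
    duhamel r A (fun s => K * g s) x = exp (-(r * x)) * A + K * duhamel r 0 g x := by
  simp only [duhamel, mul_left_comm _ K, intervalIntegral.integral_const_mul]
  ring

theorem duhamel_add_const (hg : Continuous g) (ε x : ℝ) :
    duhamel r A (fun s => g s + ε) x = duhamel r A g x + ε * duhamel r 0 (fun _ => 1) x := by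
  have hgi : IntervalIntegrable (fun s => exp (r * s) * g s) MeasureTheory.volume 0 x :=
    (by fun_prop : Continuous fun s => exp (r * s) * g s).intervalIntegrable _ _
  have hεi : IntervalIntegrable (fun s => exp (r * s) * ε) MeasureTheory.volume 0 x :=
    (by fun_prop : Continuous fun s => exp (r * s) * ε).intervalIntegrable _ _
  simp only [duhamel, mul_add, mul_one, zero_add]
  rw [intervalIntegral.integral_add hgi hεi, intervalIntegral.integral_mul_const]
  ring

theorem duhamel_one_le (hr : 0 < r) (x : ℝ) : duhamel r 0 (fun _ => 1) x ≤ r⁻¹ := by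
  have hI : ∫ s in (0 : ℝ)..x, exp (r * s) = r⁻¹ * (exp (r * x) - 1) := by
    rw [intervalIntegral.integral_comp_mul_left exp hr.ne', integral_exp, mul_zero, exp_zero,
      smul_eq_mul]
  have : exp (-(r * x)) * exp (r * x) = 1 := by rw [← exp_add]; simp
  simp only [duhamel, zero_add, mul_one, hI]
  nlinarith [exp_pos (-(r * x)), inv_pos.2 hr]

end Duhamel

section Comparison

variable {r T : ℝ} {Γ m f g : ℝ → ℝ}

theorem le_duhamel_of_lt (hΓ : ∀ x ∈ Icc 0 T, HasDerivAt Γ (f x - m x * Γ x) x)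
    (hm : ∀ x ∈ Icc 0 T, r ≤ m x) (hg : Continuous g) (hfg : ∀ x ∈ Icc 0 T, f x < g x)
    (hg₀ : ∀ x ∈ Icc 0 T, 0 ≤ g x) : ∀ x ∈ Icc 0 T, Γ x ≤ duhamel r |Γ 0| g x := by
  refine image_le_of_deriv_right_lt_deriv_boundary
    (fun x hx => (hΓ x hx).continuousAt.continuousWithinAt)
    (fun x hx => (hΓ x (Ico_subset_Icc_self hx)).hasDerivWithinAt)
    (by simp [duhamel, le_abs_self]) (hasDerivAt_duhamel hg) ?_
  intro x hx hΓx
  have hx' := Ico_subset_Icc_self hx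
  have hw : 0 ≤ duhamel r |Γ 0| g x :=
    duhamel_nonneg (abs_nonneg _) hx.1 fun s hs => hg₀ s ⟨hs.1, hs.2.trans hx'.2⟩
  have hmΓ : r * Γ x ≤ m x * Γ x := mul_le_mul_of_nonneg_right (hm x hx') (hΓx ▸ hw)
  rw [← hΓx]
  linarith [hfg x hx']

theorem abs_le_duhamel (hΓ : ∀ x ∈ Icc 0 T, HasDerivAt Γ (f x - m x * Γ x) x)
    (hm : ∀ x ∈ Icc 0 T, r ≤ m x) (hg : Continuous g) (hfg : ∀ x ∈ Icc 0 T, |f x| ≤ g x) :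
    ∀ x ∈ Icc 0 T, |Γ x| ≤ duhamel r |Γ 0| g x := by
  intro x hx
  have hε : ∀ ε > 0, |Γ x| ≤ duhamel r |Γ 0| g x + ε * duhamel r 0 (fun _ => 1) x := by
    intro ε hε
    have hgε : Continuous fun s => g s + ε := hg.add continuous_const
    have hfgε : ∀ x ∈ Icc 0 T, |f x| < g x + ε := fun x hx =>
      (hfg x hx).trans_lt (lt_add_of_pos_right _ hε)
    have hgε₀ : ∀ x ∈ Icc 0 T, 0 ≤ g x + ε := fun x hx => (abs_nonneg _).trans (hfgε x hx).le
    have hup := le_duhamel_of_lt hΓ hm hgε (fun x hx => (le_abs_self _).trans_lt (hfgε x hx))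
      hgε₀ x hx
    have hlow := le_duhamel_of_lt (Γ := -Γ) (f := -f)
      (fun x hx => (hΓ x hx).neg.congr_deriv (by simp only [Pi.neg_apply]; ring)) hm hgε
      (fun x hx => (neg_le_abs _).trans_lt (hfgε x hx)) hgε₀ x hx
    simp only [Pi.neg_apply, abs_neg] at hlow
    rw [← duhamel_add_const hg]
    exact abs_le.2 ⟨by linarith, hup⟩
  have hlim : Tendsto (fun ε => duhamel r |Γ 0| g x + ε * duhamel r 0 (fun _ => 1) x)
      (𝓝[>] 0) (𝓝 (duhamel r |Γ 0| g x)) := by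
    refine ((Continuous.tendsto' ?_ 0 _ ?_)).mono_left nhdsWithin_le_nhds
    · fun_prop
    · simp
  exact ge_of_tendsto hlim (eventually_nhdsWithin_of_forall hε)

end Comparison

section Weight

variable {p c s τ : ℝ}

/-- The `|s|` removes the pole of `(p + c * s)⁻¹` at `s = -p / c`, so that the weight is continuous
on all of `ℝ`; on `[0, τ]` it is `β(s)²`. -/
theorem continuous_inv_sq_add_mul_abs (hp : 0 < p) (hc : 0 ≤ c) :
    Continuous fun s : ℝ => ((p + c * |s|)⁻¹) ^ 2 :=
  ((continuous_const.add (continuous_const.mul continuous_abs)).inv₀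
    fun s => (add_pos_of_pos_of_nonneg hp (mul_nonneg hc (abs_nonneg s))).ne').pow 2

theorem inv_add_mul_le (hp : 0 < p) (hc : 0 ≤ c) (hs : 0 ≤ s) (hsτ : s ≤ τ) :
    (p + c * s)⁻¹ ≤ (1 + c / p * (τ - s)) * (p + c * τ)⁻¹ := by
  have hexpand :
      (p + c * s) * (1 + c / p * (τ - s)) = p + c * τ + c * s * (c / p) * (τ - s) := by
    field_simp
    ring
  have hτ : 0 ≤ τ := hs.trans hsτ
  rw [← div_eq_mul_inv, le_div_iff₀ (by positivity), inv_mul_le_iff₀ (by positivity), hexpand]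
  have : 0 ≤ c * s * (c / p) * (τ - s) :=
    mul_nonneg (by positivity) (sub_nonneg.2 hsτ)
  linarith

theorem sq_one_add_mul_le_mul_exp {a x : ℝ} (hx : 0 ≤ x) :
    (1 + a * x) ^ 2 ≤ (2 + 128 * a ^ 2) * exp (x / 4) := by
  have h8 : x / 8 + 1 ≤ exp (x / 8) := add_one_le_exp _
  have hsq : exp (x / 8) * exp (x / 8) = exp (x / 4) := by rw [← exp_add]; ring_nf
  have hx2 : x ^ 2 ≤ 64 * exp (x / 4) := by nlinarith [exp_pos (x / 8)]
  have h1 : 1 ≤ exp (x / 4) := one_le_exp (by positivity)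
  nlinarith [sq_nonneg (1 - a * x), mul_le_mul_of_nonneg_left hx2 (sq_nonneg a)]

theorem exp_mul_inv_sq_le (hp : 0 < p) (hc : 0 ≤ c) (hs : 0 ≤ s) (hsτ : s ≤ τ) :
    exp (-(1 / 2 * (τ - s))) * ((p + c * s)⁻¹) ^ 2 ≤
      (2 + 128 * (c / p) ^ 2) * ((p + c * τ)⁻¹) ^ 2 * exp (-(1 / 4 * (τ - s))) := by
  have hd : 0 ≤ τ - s := sub_nonneg.2 hsτ
  have hβ : ((p + c * s)⁻¹) ^ 2 ≤ (1 + c / p * (τ - s)) ^ 2 * ((p + c * τ)⁻¹) ^ 2 := by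
    rw [← mul_pow]
    exact pow_le_pow_left₀ (by positivity) (inv_add_mul_le hp hc hs hsτ) 2
  have hexp : exp (-(1 / 2 * (τ - s))) * exp ((τ - s) / 4) = exp (-(1 / 4 * (τ - s))) := by
    rw [← exp_add]; ring_nf
  calc exp (-(1 / 2 * (τ - s))) * ((p + c * s)⁻¹) ^ 2
      ≤ exp (-(1 / 2 * (τ - s))) * ((1 + c / p * (τ - s)) ^ 2 * ((p + c * τ)⁻¹) ^ 2) := by
        gcongr
    _ ≤ exp (-(1 / 2 * (τ - s))) *
          ((2 + 128 * (c / p) ^ 2) * exp ((τ - s) / 4) * ((p + c * τ)⁻¹) ^ 2) := by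
        gcongr
        exact sq_one_add_mul_le_mul_exp hd
    _ = _ := by rw [← hexp]; ring

theorem duhamel_inv_sq_le (hp : 0 < p) (hc : 0 ≤ c) (hτ : 0 ≤ τ) :
    duhamel (1 / 2) 0 (fun s => ((p + c * |s|)⁻¹) ^ 2) τ ≤
      (8 + 512 * (c / p) ^ 2) * ((p + c * τ)⁻¹) ^ 2 := by
  set M := (2 + 128 * (c / p) ^ 2) * ((p + c * τ)⁻¹) ^ 2
  have hw := continuous_inv_sq_add_mul_abs hp hc
  calc duhamel (1 / 2) 0 (fun s => ((p + c * |s|)⁻¹) ^ 2) τ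
      = ∫ s in (0 : ℝ)..τ, exp (-(1 / 2 * (τ - s))) * ((p + c * |s|)⁻¹) ^ 2 :=
        duhamel_zero_eq_integral τ
    _ ≤ ∫ s in (0 : ℝ)..τ, M * (exp (-(1 / 4 * (τ - s))) * 1) := by
        refine intervalIntegral.integral_mono_on hτ
          (Continuous.intervalIntegrable (by fun_prop) _ _)
          (Continuous.intervalIntegrable (by fun_prop) _ _) fun s hs => ?_
        rw [abs_of_nonneg hs.1, mul_one]
        exact exp_mul_inv_sq_le hp hc hs.1 hs.2
    _ = M * duhamel (1 / 4) 0 (fun _ => 1) τ := by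
        rw [intervalIntegral.integral_const_mul, duhamel_zero_eq_integral]
    _ ≤ M * (1 / 4)⁻¹ := by gcongr; exact duhamel_one_le (by norm_num) τ
    _ = _ := by ring

end Weight

/-- Linear ODE comparison: if `Γ' + mΓ = f` with `m ≥ 1/2` and
`|f(τ)| ≤ K β(τ)²`, `β(τ) = (1/b₀ + cτ)⁻¹`, then
`|Γ(τ)| ≤ e^{-τ/2}|Γ(0)| + C K β(τ)²` with `C` depending only on `c`
(and `b₀`). -/
theorem linear_ode_comparison (b₀ c : ℝ) (hb₀ : 0 < b₀) (hc : 0 < c) :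
    ∃ C > (0:ℝ), ∀ (T K : ℝ) (Γ Γ' m f : ℝ → ℝ), 0 ≤ T →
      (∀ τ ∈ Set.Icc (0:ℝ) T, HasDerivAt Γ (Γ' τ) τ) →
      (∀ τ ∈ Set.Icc (0:ℝ) T, Γ' τ + m τ * Γ τ = f τ) →
      (∀ τ ∈ Set.Icc (0:ℝ) T, (1:ℝ)/2 ≤ m τ) →
      (∀ τ ∈ Set.Icc (0:ℝ) T, |f τ| ≤ K * ((1 / b₀ + c * τ)⁻¹) ^ 2) →
      ∀ τ ∈ Set.Icc (0:ℝ) T,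
        |Γ τ| ≤ Real.exp (-τ / 2) * |Γ 0| + C * K * ((1 / b₀ + c * τ)⁻¹) ^ 2 := by
  refine ⟨8 + 512 * (c / (1 / b₀)) ^ 2, by positivity, ?_⟩
  intro T K Γ Γ' m f hT hΓ hode hm hf τ hτ
  have hp : 0 < 1 / b₀ := one_div_pos.2 hb₀
  have hK : 0 ≤ K :=
    nonneg_of_mul_nonneg_left ((abs_nonneg _).trans (hf 0 ⟨le_rfl, hT⟩)) (by positivity)
  have hΓf : ∀ x ∈ Icc 0 T, HasDerivAt Γ (f x - m x * Γ x) x := fun x hx =>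
    (hΓ x hx).congr_deriv (by linarith [hode x hx])
  have hfw : ∀ x ∈ Icc 0 T, |f x| ≤ K * ((1 / b₀ + c * |x|)⁻¹) ^ 2 := fun x hx => by
    simpa only [abs_of_nonneg hx.1] using hf x hx
  have hbound := abs_le_duhamel hΓf hm
    ((continuous_inv_sq_add_mul_abs hp hc.le).const_mul K) hfw τ hτ
  rw [duhamel_const_mul, show -(1 / 2 * τ) = -τ / 2 by ring] at hbound
  have hweight := duhamel_inv_sq_le hp hc.le hτ.1
  linarith [mul_le_mul_of_nonneg_left hweight hK]
end
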